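/- arXiv:2110.00719 — 3 statements merged into one kernel-verified Lean document; each statement's English description precedes it below -/
import Mathlib

section
/- Let α > 0, let 0 ≤ p < 1/2, and let h : ℝ → ℝ be differentiable with 0 < h(x) < 1 for all x. Define c(x) = h(x)(1-p) + (1-h(x))p. Suppose L ≥ 0 satisfies |h'(x)| ≤ L · h(x)(1-h(x)) for all x with |x| ≤ α. Then |c'(x)| ≤ (1 - 2p) · L · c(x)(1 - c(x)) for all x with |x| ≤ α. -/
theorem stmt_4 (α p L : ℝ) (hα : 0 < α) (hp0 : 0 ≤ p) (hp : p < 1 / 2)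
    (h : ℝ → ℝ) (hdiff : Differentiable ℝ h) (hrange : ∀ x, 0 < h x ∧ h x < 1)
    (hL : 0 ≤ L) (hLbound : ∀ x, |x| ≤ α → |deriv h x| ≤ L * (h x * (1 - h x)))
    (c : ℝ → ℝ) (hc : ∀ x, c x = h x * (1 - p) + (1 - h x) * p) :
    ∀ x, |x| ≤ α → |deriv c x| ≤ (1 - 2 * p) * L * (c x * (1 - c x)) := by
  intro x hx
  have hceq : c = fun x => h x * (1 - p) + (1 - h x) * p := funext hc
  have hd : HasDerivAt c ((1 - 2 * p) * deriv h x) x := by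
    rw [hceq]
    have H := (hdiff x).hasDerivAt
    have : HasDerivAt (fun x => h x * (1 - p) + (1 - h x) * p)
        (deriv h x * (1 - p) + (0 - deriv h x) * p) x := by
      exact ((H.mul_const (1 - p)).add (((hasDerivAt_const x (1:ℝ)).sub H).mul_const p))
    convert this using 1
    ring
  rw [hd.deriv]
  have hb := hLbound x hx
  have h0 := (hrange x).1
  have h1 := (hrange x).2
  have hcx := hc x
  have h2p : 0 ≤ 1 - 2 * p := by linarith
  rw [abs_mul, abs_of_nonneg h2p]
  have key : h x * (1 - h x) ≤ c x * (1 - c x) := by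
    rw [hcx]; nlinarith [sq_nonneg (1 - 2 * h x), mul_pos h0 (by linarith : (0:ℝ) < 1 - h x), mul_nonneg hp0 (by linarith : (0:ℝ) ≤ 1 - 2*p)]
  calc (1 - 2 * p) * |deriv h x| ≤ (1 - 2 * p) * (L * (h x * (1 - h x))) := by
        exact mul_le_mul_of_nonneg_left hb h2p
    _ ≤ (1 - 2 * p) * L * (c x * (1 - c x)) := by
        rw [mul_assoc]
        exact mul_le_mul_of_nonneg_left (mul_le_mul_of_nonneg_left key hL) h2p
end

section
/- Let h(x) = 1/(1 + exp(-x)) be the logistic function, let 0 ≤ p < 1/2, and define c(x) = h(x)(1-p) + (1-h(x))p. Then for all real x, |c'(x)| ≤ (1 - 2p) · c(x)(1 - c(x)). -/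
/-!
Writing `c = p + (1 - 2p) h`, the perturbation scales the derivative by `1 - 2p`, while
`c (1 - c) - h (1 - h) = p (1 - p) (1 - 2h)²` shows that flipping never decreases the variance
term `h (1 - h)`. Since the logistic function satisfies `h' = h (1 - h)`, the bound follows.
-/

open Real

def flipProb (p : ℝ) (f : ℝ → ℝ) (x : ℝ) : ℝ :=
  f x * (1 - p) + (1 - f x) * p

lemma flipProb_mul_one_sub_flipProb (p : ℝ) (f : ℝ → ℝ) (x : ℝ) :
    flipProb p f x * (1 - flipProb p f x) =
      f x * (1 - f x) + p * (1 - p) * (1 - 2 * f x) ^ 2 := by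
  unfold flipProb
  ring

lemma mul_one_sub_le_flipProb {p : ℝ} (hp0 : 0 ≤ p) (hp1 : p ≤ 1) (f : ℝ → ℝ) (x : ℝ) :
    f x * (1 - f x) ≤ flipProb p f x * (1 - flipProb p f x) := by
  rw [flipProb_mul_one_sub_flipProb]
  have : 0 ≤ 1 - p := by linarith
  exact le_add_of_nonneg_right (by positivity)

lemma hasDerivAt_flipProb {f : ℝ → ℝ} {f' x : ℝ} (hf : HasDerivAt f f' x) (p : ℝ) :
    HasDerivAt (flipProb p f) ((1 - 2 * p) * f') x := by
  have : flipProb p f = fun y => p + (1 - 2 * p) * f y := by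
    funext y
    simp only [flipProb]
    ring
  rw [this]
  exact (hf.const_mul _).const_add p

lemma abs_deriv_flipProb_le {f : ℝ → ℝ} {f' x L p : ℝ} (hp0 : 0 ≤ p) (hp : p ≤ 1 / 2)
    (hL : 0 ≤ L) (hf : HasDerivAt f f' x) (hf' : |f'| ≤ L * (f x * (1 - f x))) :
    |deriv (flipProb p f) x| ≤ (1 - 2 * p) * L * (flipProb p f x * (1 - flipProb p f x)) := by
  have hq : 0 ≤ 1 - 2 * p := by linarith
  calc |deriv (flipProb p f) x| = (1 - 2 * p) * |f'| := by
        rw [(hasDerivAt_flipProb hf p).deriv, abs_mul, abs_of_nonneg hq]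
    _ ≤ (1 - 2 * p) * (L * (flipProb p f x * (1 - flipProb p f x))) := by
        refine mul_le_mul_of_nonneg_left (hf'.trans ?_) hq
        exact mul_le_mul_of_nonneg_left (mul_one_sub_le_flipProb hp0 (by linarith) f x) hL
    _ = _ := by ring

theorem stmt_9 (p : ℝ) (hp0 : 0 ≤ p) (hp : p < 1 / 2)
    (h c : ℝ → ℝ) (hdef : ∀ x, h x = 1 / (1 + Real.exp (-x)))
    (hc : ∀ x, c x = h x * (1 - p) + (1 - h x) * p) :
    ∀ x : ℝ, |deriv c x| ≤ (1 - 2 * p) * (c x * (1 - c x)) := by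
  intro x
  have h_eq : h = sigmoid := funext fun y => by rw [hdef, sigmoid_def, one_div]
  have c_eq : c = flipProb p sigmoid := funext fun y => by rw [hc, h_eq, flipProb]
  have hsteep : |sigmoid x * (1 - sigmoid x)| ≤ 1 * (sigmoid x * (1 - sigmoid x)) := by
    rw [one_mul, abs_of_nonneg]
    exact mul_nonneg (sigmoid_nonneg x) (sub_nonneg.mpr (sigmoid_le_one x))
  simpa [c_eq] using abs_deriv_flipProb_le hp0 hp.le zero_le_one (hasDerivAt_sigmoid x) hsteep
end

section
/- Let σ > 0, α > 0, let Φ denote the cumulative distribution function of the standard Gaussian distribution and φ its density, and define h(x) = Φ(x/σ), so that h'(x) = φ(x/σ)/σ. Then for all x with |x| ≤ α, |h'(x)| / (h(x)(1 - h(x))) ≤ 8(α/σ + 1)/σ. -/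
/-!
For `y ≥ 0` we have `Φ(y) ≥ 1/2`, so it suffices to bound the Mills ratio `φ(y) / (1 - Φ(y))`
by `4 (y + 1)`. The tail `1 - Φ(y)` dominates the integral of `φ` over `[y, y + δ]` with
`δ = 1 / (2 (y + 1))`, on which `φ ≥ φ(y + δ) = φ(y) e^{-yδ - δ²/2} ≥ e^{-5/8} φ(y) ≥ φ(y) / 2`.
Negative `y` reduce to positive ones by the symmetry `Φ(-y) = 1 - Φ(y)`, and the rescaling
`x ↦ x / σ` produces the factor `1 / σ`.
-/

open MeasureTheory ProbabilityTheory

/-- Density of the standard Gaussian distribution. -/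
noncomputable def stdGaussianPDF (x : ℝ) : ℝ :=
  (Real.sqrt (2 * Real.pi))⁻¹ * Real.exp (-(x ^ 2) / 2)

/-- Cumulative distribution function of the standard Gaussian distribution. -/
noncomputable def stdGaussianCDF (x : ℝ) : ℝ :=
  ∫ t in Set.Iic x, stdGaussianPDF t

lemma stdGaussianPDF_eq_gaussianPDFReal : stdGaussianPDF = gaussianPDFReal 0 1 := by
  ext x
  simp [stdGaussianPDF, gaussianPDFReal_def]

lemma stdGaussianPDF_pos (x : ℝ) : 0 < stdGaussianPDF x := by
  unfold stdGaussianPDF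
  positivity

lemma stdGaussianPDF_neg (x : ℝ) : stdGaussianPDF (-x) = stdGaussianPDF x := by
  simp [stdGaussianPDF]

lemma stdGaussianPDF_add (y δ : ℝ) :
    stdGaussianPDF (y + δ) = Real.exp (-(y * δ + δ ^ 2 / 2)) * stdGaussianPDF y := by
  simp only [stdGaussianPDF]
  rw [mul_left_comm, ← Real.exp_add]
  ring_nf

lemma stdGaussianPDF_antitoneOn : AntitoneOn stdGaussianPDF (Set.Ici 0) := by
  intro a ha b _ hab
  unfold stdGaussianPDF
  gcongr

lemma integrable_stdGaussianPDF : Integrable stdGaussianPDF := by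
  rw [stdGaussianPDF_eq_gaussianPDFReal]
  exact integrable_gaussianPDFReal 0 1

lemma integral_stdGaussianPDF : ∫ t, stdGaussianPDF t = 1 := by
  rw [stdGaussianPDF_eq_gaussianPDFReal]
  exact integral_gaussianPDFReal_eq_one 0 one_ne_zero

lemma setIntegral_stdGaussianPDF_pos {s : Set ℝ} (hs : volume s ≠ 0) :
    0 < ∫ t in s, stdGaussianPDF t := by
  rw [setIntegral_pos_iff_support_of_nonneg_ae
    (.of_forall fun t => (stdGaussianPDF_pos t).le) integrable_stdGaussianPDF.integrableOn,
    Function.support_eq_univ fun t => (stdGaussianPDF_pos t).ne', Set.univ_inter]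
  exact pos_iff_ne_zero.mpr hs

lemma stdGaussianCDF_add_integral_Ioi (x : ℝ) :
    stdGaussianCDF x + ∫ t in Set.Ioi x, stdGaussianPDF t = 1 := by
  rw [stdGaussianCDF, intervalIntegral.integral_Iic_add_Ioi
    integrable_stdGaussianPDF.integrableOn integrable_stdGaussianPDF.integrableOn,
    integral_stdGaussianPDF]

lemma stdGaussianCDF_pos (x : ℝ) : 0 < stdGaussianCDF x :=
  setIntegral_stdGaussianPDF_pos (by simp)

lemma stdGaussianCDF_lt_one (x : ℝ) : stdGaussianCDF x < 1 := by
  have := stdGaussianCDF_add_integral_Ioi x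
  have := setIntegral_stdGaussianPDF_pos (s := Set.Ioi x) (by simp)
  linarith

lemma stdGaussianCDF_neg (x : ℝ) : stdGaussianCDF (-x) = 1 - stdGaussianCDF x := by
  have htail : stdGaussianCDF (-x) = ∫ t in Set.Ioi x, stdGaussianPDF t := by
    simp only [stdGaussianCDF, ← integral_comp_neg_Ioi, stdGaussianPDF_neg]
  linarith [stdGaussianCDF_add_integral_Ioi x]

lemma stdGaussianCDF_zero : stdGaussianCDF 0 = 1 / 2 := by
  have := stdGaussianCDF_neg 0
  rw [neg_zero] at this
  linarith

lemma stdGaussianCDF_monotone : Monotone stdGaussianCDF := fun _ _ hab =>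
  setIntegral_mono_set integrable_stdGaussianPDF.integrableOn
    (.of_forall fun t => (stdGaussianPDF_pos t).le) (Set.Iic_subset_Iic.mpr hab).eventuallyLE

lemma mul_stdGaussianPDF_add_le_integral_Ioi {y δ : ℝ} (hy : 0 ≤ y) (hδ : 0 ≤ δ) :
    δ * stdGaussianPDF (y + δ) ≤ ∫ t in Set.Ioi y, stdGaussianPDF t := by
  calc δ * stdGaussianPDF (y + δ)
      = stdGaussianPDF (y + δ) * volume.real (Set.Ioc y (y + δ)) := by
        rw [Real.volume_real_Ioc, add_sub_cancel_left, max_eq_left hδ, mul_comm]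
    _ ≤ ∫ t in Set.Ioc y (y + δ), stdGaussianPDF t :=
        setIntegral_ge_of_const_le_real measurableSet_Ioc (by simp)
          (fun t ht => stdGaussianPDF_antitoneOn (Set.mem_Ici.mpr (hy.trans ht.1.le))
            (Set.mem_Ici.mpr (by linarith)) ht.2)
          integrable_stdGaussianPDF.integrableOn
    _ ≤ ∫ t in Set.Ioi y, stdGaussianPDF t :=
        setIntegral_mono_set integrable_stdGaussianPDF.integrableOn
          (.of_forall fun t => (stdGaussianPDF_pos t).le) Set.Ioc_subset_Ioi_self.eventuallyLE

lemma exp_five_eighths_le_two : Real.exp (5 / 8) ≤ 2 := by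
  rw [← Real.le_log_iff_exp_le two_pos]
  linarith [Real.log_two_gt_d9]

lemma stdGaussianPDF_div_le_integral_Ioi {y : ℝ} (hy : 0 ≤ y) :
    stdGaussianPDF y / (4 * (y + 1)) ≤ ∫ t in Set.Ioi y, stdGaussianPDF t := by
  set δ := 1 / (2 * (y + 1)) with hδ
  have hδ_pos : 0 < δ := by positivity
  have hyδ : y * δ ≤ 1 / 2 := by
    rw [hδ, mul_one_div, div_le_div_iff₀ (by positivity) two_pos]
    linarith
  have hδ_sq : δ ^ 2 ≤ 1 / 4 := by
    have : δ ≤ 1 / 2 := by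
      rw [hδ, div_le_div_iff₀ (by positivity) two_pos]
      linarith
    nlinarith
  have hexp : 1 / 2 ≤ Real.exp (-(y * δ + δ ^ 2 / 2)) := by
    calc (1 : ℝ) / 2 ≤ Real.exp (-(5 / 8)) := by
          rw [Real.exp_neg, one_div]
          exact inv_anti₀ (Real.exp_pos _) exp_five_eighths_le_two
      _ ≤ _ := Real.exp_le_exp.mpr (by linarith)
  calc stdGaussianPDF y / (4 * (y + 1)) = δ * (1 / 2 * stdGaussianPDF y) := by
        rw [hδ]; field_simp; ring
    _ ≤ δ * stdGaussianPDF (y + δ) := by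
        rw [stdGaussianPDF_add]
        gcongr
        exact (stdGaussianPDF_pos y).le
    _ ≤ _ := mul_stdGaussianPDF_add_le_integral_Ioi hy hδ_pos.le

lemma stdGaussianPDF_div_cdf_mul_one_sub_cdf_le_of_nonneg {y : ℝ} (hy : 0 ≤ y) :
    stdGaussianPDF y / (stdGaussianCDF y * (1 - stdGaussianCDF y)) ≤ 8 * (y + 1) := by
  have hΦ : 1 / 2 ≤ stdGaussianCDF y := stdGaussianCDF_zero ▸ stdGaussianCDF_monotone hy
  have htail : stdGaussianPDF y / (4 * (y + 1)) ≤ 1 - stdGaussianCDF y := by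
    linarith [stdGaussianPDF_div_le_integral_Ioi hy, stdGaussianCDF_add_integral_Ioi y]
  rw [div_le_iff₀ (by positivity)] at htail
  have htail_pos : 0 < 1 - stdGaussianCDF y := sub_pos.mpr (stdGaussianCDF_lt_one y)
  rw [div_le_iff₀ (mul_pos (stdGaussianCDF_pos y) htail_pos)]
  nlinarith [mul_nonneg (mul_nonneg (sub_nonneg.mpr hΦ) htail_pos.le) (by linarith : (0 : ℝ) ≤ y + 1)]

lemma stdGaussianPDF_div_cdf_mul_one_sub_cdf_le (y : ℝ) :
    stdGaussianPDF y / (stdGaussianCDF y * (1 - stdGaussianCDF y)) ≤ 8 * (|y| + 1) := by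
  rcases le_or_gt 0 y with hy | hy
  · rw [abs_of_nonneg hy]
    exact stdGaussianPDF_div_cdf_mul_one_sub_cdf_le_of_nonneg hy
  · have hsymm : stdGaussianCDF y * (1 - stdGaussianCDF y)
        = stdGaussianCDF (-y) * (1 - stdGaussianCDF (-y)) := by
      rw [stdGaussianCDF_neg]; ring
    rw [abs_of_neg hy, hsymm, ← stdGaussianPDF_neg]
    exact stdGaussianPDF_div_cdf_mul_one_sub_cdf_le_of_nonneg (by linarith)

theorem stmt_11_general (σ α : ℝ) (hσ : 0 < σ)
    (h h' : ℝ → ℝ) (hdef : ∀ x, h x = stdGaussianCDF (x / σ))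
    (hderiv : ∀ x, h' x = stdGaussianPDF (x / σ) / σ) :
    ∀ x, |x| ≤ α → |h' x| / (h x * (1 - h x)) ≤ 8 * (α / σ + 1) / σ := by
  intro x hx
  have hy : |x / σ| ≤ α / σ := by
    rw [abs_div, abs_of_pos hσ]
    gcongr
  rw [hdef, hderiv, abs_of_nonneg (div_nonneg (stdGaussianPDF_pos _).le hσ.le), div_right_comm]
  gcongr
  exact (stdGaussianPDF_div_cdf_mul_one_sub_cdf_le _).trans (by gcongr)

theorem stmt_11 (σ α : ℝ) (hσ : 0 < σ) (hα : 0 < α)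
    (h h' : ℝ → ℝ) (hdef : ∀ x, h x = stdGaussianCDF (x / σ))
    (hderiv : ∀ x, h' x = stdGaussianPDF (x / σ) / σ) :
    ∀ x, |x| ≤ α → |h' x| / (h x * (1 - h x)) ≤ 8 * (α / σ + 1) / σ :=
  stmt_11_general σ α hσ h h' hdef hderiv
end
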